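/- arXiv:1312.2253 — 2 statements merged into one kernel-verified Lean document; each statement's English description precedes it below -/
import Mathlib

section
/- Let U and V be centered random vectors in ℝ^d with 𝔼|U|⁴ < ∞ and 𝔼|V|⁴ < ∞, and let (U_*,V_*) be an independent copy of the pair (U,V). Then the average square parallelogram area admits the exact decomposition: 𝔼( |U−U_*|²|V−V_*|² − ((U−U_*)·(V−V_*))² ) = 2·𝔼( |U|²|V|² − (U·V)² ) + Tr( (C_{U,V} − C_{V,U})(C_{V,U} − C_{U,V}) ) + 2·( Tr(C_{U,U})·Tr(C_{V,V}) − Tr(C_{U,V})² − Tr(C_{U,U} C_{V,V}) + Tr(C_{U,V} C_{V,U}) ), and each of the three summands on the right-hand side is nonnegative. -/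
open MeasureTheory ProbabilityTheory
open scoped RealInnerProductSpace

/-- The matrix `C_{X,Y} = 𝔼(X ⊗ Y)` with entries `𝔼(X_i Y_j)`. -/
noncomputable def covMatrix {Ω : Type*} [MeasurableSpace Ω] (μ : Measure Ω) {d : ℕ}
    (X Y : Ω → EuclideanSpace ℝ (Fin d)) : Matrix (Fin d) (Fin d) ℝ :=
  Matrix.of fun i j => ∫ ω, X ω i * Y ω j ∂μ

/-!
Write `P = (U, V)` and `P* = (U*, V*)`. Expanding `∏ (f(P) - f(P*))` over subsets and using
independence and equality in law, for centred functions `f, g, h, k` of `P` one gets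
`𝔼[(f - f*)(g - g*)(h - h*)(k - k*)] = 2𝔼[fghk] + 2(𝔼[fg]𝔼[hk] + 𝔼[fh]𝔼[gk] + 𝔼[fk]𝔼[gh])`.
By Lagrange's identity `|x|²|y|² - (x·y)² = ∑_{i,j} (x_i² y_j² - x_i y_i x_j y_j)` the left-hand
side is a double sum of such fourth moments, and summing the formula over `i, j` gives the
decomposition. The first summand is nonnegative by
Cauchy–Schwarz, the second is `Tr(M Mᵀ)` for `M = C_{U,V} - C_{V,U}`, and the third equals
`¼ ∑_{i,j} 𝔼[Z_{ij}²]` with `Z_{ij} = U_i V*_j - U_j V*_i + U*_i V_j - U*_j V_i`.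
-/

open Finset
open scoped Matrix

lemma integrable_finset_prod_of_memLp {Ω ι : Type*} [MeasurableSpace Ω] {μ : Measure Ω}
    [IsFiniteMeasure μ] {n : ℕ} {s : Finset ι} {f : ι → Ω → ℝ} (hs : #s ≤ n)
    (hf : ∀ i ∈ s, MemLp (f i) n μ) : Integrable (fun ω => ∏ i ∈ s, f i ω) μ := by
  refine (MemLp.prod' hf).integrable ?_
  rw [Finset.sum_const, nsmul_eq_mul, ENNReal.one_le_inv]
  rcases Nat.eq_zero_or_pos n with rfl | hn
  · simp [Finset.card_eq_zero.mp (Nat.le_zero.mp hs)]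
  calc (#s : ENNReal) * (n : ENNReal)⁻¹ ≤ n * (n : ENNReal)⁻¹ := by gcongr
    _ = 1 := ENNReal.mul_inv_cancel (by exact_mod_cast hn.ne') (by simp)

lemma integrable_mul_mul_mul_of_memLp_four {Ω : Type*} [MeasurableSpace Ω] {μ : Measure Ω}
    [IsFiniteMeasure μ] {f g h k : Ω → ℝ} (hf : MemLp f 4 μ) (hg : MemLp g 4 μ)
    (hh : MemLp h 4 μ) (hk : MemLp k 4 μ) : Integrable (fun ω => f ω * g ω * h ω * k ω) μ := by
  simpa [Fin.prod_univ_four] using integrable_finset_prod_of_memLp (n := 4) (s := univ)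
    (f := ![f, g, h, k]) (by simp) fun i _ => by fin_cases i <;> assumption

section IndependentCopy

variable {Ω E : Type*} [MeasurableSpace Ω] [MeasurableSpace E] {μ : Measure Ω} {P P' : Ω → E}

lemma integral_mul_comp_of_indep_copy (hindep : IndepFun P P' μ)
    (hident : IdentDistrib P P' μ μ) {φ ψ : E → ℝ} (hφ : Measurable φ) (hψ : Measurable ψ) :
    ∫ ω, φ (P ω) * ψ (P' ω) ∂μ = (∫ ω, φ (P ω) ∂μ) * ∫ ω, ψ (P ω) ∂μ := by
  calc _ = (∫ ω, φ (P ω) ∂μ) * ∫ ω, ψ (P' ω) ∂μ :=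
        (hindep.comp hφ hψ).integral_fun_mul_eq_mul_integral
          (hφ.comp_aemeasurable hident.aemeasurable_fst).aestronglyMeasurable
          (hψ.comp_aemeasurable hident.aemeasurable_snd).aestronglyMeasurable
    _ = _ := congrArg (_ * ·) (hident.comp hψ).integral_eq.symm

lemma integrable_mul_comp_of_indep_copy (hindep : IndepFun P P' μ)
    (hident : IdentDistrib P P' μ μ) {φ ψ : E → ℝ} (hφ : Measurable φ) (hψ : Measurable ψ)
    (hφi : Integrable (fun ω => φ (P ω)) μ) (hψi : Integrable (fun ω => ψ (P ω)) μ) :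
    Integrable (fun ω => φ (P ω) * ψ (P' ω)) μ :=
  (hindep.comp hφ hψ).integrable_mul hφi ((hident.comp hψ).integrable_iff.mp hψi)

theorem integral_prod_sub_comp_of_indep_copy {ι : Type*} [DecidableEq ι]
    (hindep : IndepFun P P' μ) (hident : IdentDistrib P P' μ μ) (s : Finset ι)
    {f : ι → E → ℝ} (hf : ∀ i, Measurable (f i))
    (hint : ∀ t ⊆ s, Integrable (fun ω => ∏ i ∈ t, f i (P ω)) μ) :
    ∫ ω, ∏ i ∈ s, (f i (P ω) - f i (P' ω)) ∂μ
      = ∑ t ∈ s.powerset, (∫ ω, ∏ i ∈ t, f i (P ω) ∂μ) * ∫ ω, ∏ i ∈ s \ t, -f i (P ω) ∂μ := by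
  have hmeas (t : Finset ι) : Measurable fun x => ∏ i ∈ t, f i x :=
    Finset.measurable_prod t fun i _ => hf i
  have hnmeas (t : Finset ι) : Measurable fun x => ∏ i ∈ t, -f i x :=
    Finset.measurable_prod t fun i _ => (hf i).neg
  simp_rw [sub_eq_add_neg, Finset.prod_add]
  rw [integral_finsetSum]
  · exact Finset.sum_congr rfl fun t _ =>
      integral_mul_comp_of_indep_copy hindep hident (hmeas t) (hnmeas (s \ t))
  · intro t ht
    refine integrable_mul_comp_of_indep_copy hindep hident (hmeas t) (hnmeas (s \ t))
      (hint t (Finset.mem_powerset.mp ht)) ?_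
    simpa only [Finset.prod_neg] using (hint (s \ t) Finset.sdiff_subset).const_mul _

theorem integral_mul_four_sub_comp_of_indep_copy [IsProbabilityMeasure μ]
    (hindep : IndepFun P P' μ) (hident : IdentDistrib P P' μ μ) {f g h k : E → ℝ}
    (hfm : Measurable f) (hgm : Measurable g) (hhm : Measurable h) (hkm : Measurable k)
    (hf : MemLp (fun ω => f (P ω)) 4 μ) (hg : MemLp (fun ω => g (P ω)) 4 μ)
    (hh : MemLp (fun ω => h (P ω)) 4 μ) (hk : MemLp (fun ω => k (P ω)) 4 μ)
    (hf0 : ∫ ω, f (P ω) ∂μ = 0) (hg0 : ∫ ω, g (P ω) ∂μ = 0)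
    (hh0 : ∫ ω, h (P ω) ∂μ = 0) (hk0 : ∫ ω, k (P ω) ∂μ = 0) :
    ∫ ω, (f (P ω) - f (P' ω)) * (g (P ω) - g (P' ω)) * (h (P ω) - h (P' ω))
        * (k (P ω) - k (P' ω)) ∂μ
      = 2 * ∫ ω, f (P ω) * g (P ω) * h (P ω) * k (P ω) ∂μ
        + 2 * ((∫ ω, f (P ω) * g (P ω) ∂μ) * (∫ ω, h (P ω) * k (P ω) ∂μ)
          + (∫ ω, f (P ω) * h (P ω) ∂μ) * (∫ ω, g (P ω) * k (P ω) ∂μ)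
          + (∫ ω, f (P ω) * k (P ω) ∂μ) * (∫ ω, g (P ω) * h (P ω) ∂μ)) := by
  have hint : ∀ t ⊆ (univ : Finset (Fin 4)),
      Integrable (fun ω => ∏ i ∈ t, ![f, g, h, k] i (P ω)) μ := fun t _ =>
    integrable_finset_prod_of_memLp (by simpa using t.card_le_univ) fun i _ => by
      fin_cases i <;> assumption
  have hexp := integral_prod_sub_comp_of_indep_copy hindep hident univ
    (f := ![f, g, h, k]) (fun i => by fin_cases i <;> assumption) hint
  rw [show (univ : Finset (Fin 4)).powerset = {∅, {0}, {1}, {2}, {3}, {0, 1}, {0, 2}, {0, 3},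
      {1, 2}, {1, 3}, {2, 3}, {0, 1, 2}, {0, 1, 3}, {0, 2, 3}, {1, 2, 3}, univ} by decide,
    show (univ : Finset (Fin 4)) = {0, 1, 2, 3} from rfl] at hexp
  -- the eight subsets of odd size contribute nothing, by centring
  simp +decide only [Fin.isValue, Nat.succ_eq_add_one, Nat.reduceAdd, Matrix.cons_val',
    Matrix.cons_val_fin_one, mem_insert, not_false_eq_true, prod_insert, Matrix.cons_val_zero,
    Matrix.cons_val_one, mem_singleton, Matrix.cons_val, prod_singleton, sum_insert, prod_empty,
    integral_const, probReal_univ, smul_eq_mul, mul_one, sdiff_empty, mul_neg, neg_mul, neg_neg,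
    one_mul, hf0, sdiff_singleton_eq_erase, erase_insert_eq_erase, erase_eq_of_notMem,
    integral_neg, zero_mul, neg_zero, hg0, ne_eq, erase_insert_of_ne, hh0, hk0, erase_singleton,
    insert_empty_eq, sdiff_insert, mul_zero, sum_singleton, sdiff_self, bot_eq_empty,
    zero_add] at hexp
  simp only [mul_assoc] at hexp ⊢
  linarith

theorem sum_sum_integral_mul_mul_integral_nonneg (hindep : IndepFun P P' μ)
    (hident : IdentDistrib P P' μ μ) {κ : Type*} (s : Finset κ) {φ ψ : κ → E → ℝ}
    (hφm : ∀ k, Measurable (φ k)) (hψm : ∀ k, Measurable (ψ k))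
    (hφ : ∀ k, MemLp (fun ω => φ k (P ω)) 2 μ) (hψ : ∀ k, MemLp (fun ω => ψ k (P ω)) 2 μ) :
    0 ≤ ∑ k ∈ s, ∑ l ∈ s,
      (∫ ω, φ k (P ω) * φ l (P ω) ∂μ) * ∫ ω, ψ k (P ω) * ψ l (P ω) ∂μ := by
  have hint (k l : κ) : Integrable
      (fun ω => φ k (P ω) * φ l (P ω) * (ψ k (P' ω) * ψ l (P' ω))) μ :=
    integrable_mul_comp_of_indep_copy hindep hident ((hφm k).mul (hφm l)) ((hψm k).mul (hψm l))
      ((hφ k).integrable_mul (hφ l)) ((hψ k).integrable_mul (hψ l))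
  have hsq (ω : Ω) : (∑ k ∈ s, φ k (P ω) * ψ k (P' ω)) ^ 2
      = ∑ k ∈ s, ∑ l ∈ s, φ k (P ω) * φ l (P ω) * (ψ k (P' ω) * ψ l (P' ω)) := by
    rw [sq, Finset.sum_mul_sum]
    exact Finset.sum_congr rfl fun _ _ => Finset.sum_congr rfl fun _ _ => by ring
  calc 0 ≤ ∫ ω, (∑ k ∈ s, φ k (P ω) * ψ k (P' ω)) ^ 2 ∂μ :=
        integral_nonneg fun _ => sq_nonneg _
    _ = ∑ k ∈ s, ∑ l ∈ s, ∫ ω, φ k (P ω) * φ l (P ω) * (ψ k (P' ω) * ψ l (P' ω)) ∂μ := by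
        simp_rw [hsq]
        rw [integral_finsetSum _ fun k _ => integrable_finsetSum _ fun l _ => hint k l]
        exact Finset.sum_congr rfl fun k _ => integral_finsetSum _ fun l _ => hint k l
    _ = _ := Finset.sum_congr rfl fun k _ => Finset.sum_congr rfl fun l _ =>
        integral_mul_comp_of_indep_copy hindep hident ((hφm k).mul (hφm l))
          ((hψm k).mul (hψm l))

end IndependentCopy

section Euclidean

variable {ι Ω : Type*} [Fintype ι] [MeasurableSpace Ω] {μ : Measure Ω}

lemma norm_sq_mul_norm_sq_sub_inner_sq (x y : EuclideanSpace ℝ ι) :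
    ‖x‖ ^ 2 * ‖y‖ ^ 2 - ⟪x, y⟫ ^ 2
      = ∑ i, ∑ j, (x i * x i * y j * y j - x i * y i * x j * y j) := by
  rw [EuclideanSpace.real_norm_sq_eq, EuclideanSpace.real_norm_sq_eq]
  simp only [PiLp.inner_apply, RCLike.inner_apply, conj_trivial, sq, Finset.sum_mul_sum,
    ← Finset.sum_sub_distrib]
  exact Finset.sum_congr rfl fun i _ => Finset.sum_congr rfl fun j _ => by ring

lemma memLp_four_of_integrable_norm_pow_four {X : Ω → EuclideanSpace ℝ ι}
    (hX : AEStronglyMeasurable X μ) (h4 : Integrable (fun ω => ‖X ω‖ ^ 4) μ) : MemLp X 4 μ :=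
  (integrable_norm_rpow_iff hX (by norm_num) (by norm_num)).mp (by simpa using h4)

lemma MeasureTheory.MemLp.euclidean_apply {p : ENNReal} {X : Ω → EuclideanSpace ℝ ι}
    (hX : MemLp X p μ) (i : ι) : MemLp (fun ω => X ω i) p μ :=
  (EuclideanSpace.proj i : EuclideanSpace ℝ ι →L[ℝ] ℝ).comp_memLp' hX

lemma integral_apply_eq_zero {X : Ω → EuclideanSpace ℝ ι} (hX : Integrable X μ)
    (h0 : ∫ ω, X ω ∂μ = 0) (i : ι) : ∫ ω, X ω i ∂μ = 0 := by
  simpa [h0] using (EuclideanSpace.proj i : EuclideanSpace ℝ ι →L[ℝ] ℝ).integral_comp_comm hX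

lemma integral_norm_sq_mul_norm_sq_sub_inner_sq [IsFiniteMeasure μ]
    {X Y : Ω → EuclideanSpace ℝ ι} (hX : ∀ i, MemLp (fun ω => X ω i) 4 μ)
    (hY : ∀ i, MemLp (fun ω => Y ω i) 4 μ) :
    ∫ ω, (‖X ω‖ ^ 2 * ‖Y ω‖ ^ 2 - ⟪X ω, Y ω⟫ ^ 2) ∂μ
      = ∑ i, ∑ j, ((∫ ω, X ω i * X ω i * Y ω j * Y ω j ∂μ)
          - ∫ ω, X ω i * Y ω i * X ω j * Y ω j ∂μ) := by
  have hsquares (i j : ι) : Integrable (fun ω => X ω i * X ω i * Y ω j * Y ω j) μ :=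
    integrable_mul_mul_mul_of_memLp_four (hX i) (hX i) (hY j) (hY j)
  have hmixed (i j : ι) : Integrable (fun ω => X ω i * Y ω i * X ω j * Y ω j) μ :=
    integrable_mul_mul_mul_of_memLp_four (hX i) (hY i) (hX j) (hY j)
  have hint (i j : ι) : Integrable
      (fun ω => X ω i * X ω i * Y ω j * Y ω j - X ω i * Y ω i * X ω j * Y ω j) μ :=
    (hsquares i j).sub (hmixed i j)
  simp_rw [norm_sq_mul_norm_sq_sub_inner_sq]
  rw [integral_finsetSum _ fun i _ => integrable_finsetSum _ fun j _ => hint i j]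
  refine Finset.sum_congr rfl fun i _ => ?_
  rw [integral_finsetSum _ fun j _ => hint i j]
  exact Finset.sum_congr rfl fun j _ => integral_sub (hsquares i j) (hmixed i j)

end Euclidean

section Matrix

variable {n : Type*} [Fintype n]

lemma sum_sum_cov_products_eq (A B K K' : Matrix n n ℝ) (hB : Bᵀ = B) (hK : K'ᵀ = K) :
    2 * ∑ i, ∑ j, ((A i i * B j j + K i j * K i j + K i j * K i j)
        - (K i i * K j j + A i j * B i j + K i j * K' i j))
      = ((K - K') * (K' - K)).trace
        + 2 * (A.trace * B.trace - K.trace ^ 2 - (A * B).trace + (K * K').trace) := by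
  have hK' (i j : n) : K' i j = K j i := congrFun (congrFun hK j) i
  have hB' (i j : n) : B j i = B i j := congrFun (congrFun hB i) j
  have hswap : ∑ i, ∑ j, K j i * K j i = ∑ i, ∑ j, K i j * K i j := Finset.sum_comm
  have hcomm : ∑ i, ∑ j, K j i * K i j = ∑ i, ∑ j, K i j * K j i :=
    Finset.sum_congr rfl fun _ _ => Finset.sum_congr rfl fun _ _ => mul_comm _ _
  simp only [Matrix.trace, Matrix.diag, Matrix.mul_apply, Matrix.sub_apply, hK', hB', sq,
    Finset.sum_mul_sum, sub_mul, mul_sub, Finset.sum_add_distrib, Finset.sum_sub_distrib]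
  rw [hswap, hcomm]
  ring

lemma sum_sum_wedge_eq (A B K K' : Matrix n n ℝ) (hB : Bᵀ = B) (hK : K'ᵀ = K) :
    ∑ i, ∑ j, (A i i * B j j + A j j * B i i - 2 * (A i j * B i j) + K i j ^ 2 + K j i ^ 2
        - 2 * (K i i * K j j))
      = 2 * (A.trace * B.trace - K.trace ^ 2 - (A * B).trace + (K * K').trace) := by
  have hK' (i j : n) : K' i j = K j i := congrFun (congrFun hK j) i
  have hB' (i j : n) : B j i = B i j := congrFun (congrFun hB i) j
  have hswapK : ∑ i, ∑ j, K j i ^ 2 = ∑ i, ∑ j, K i j ^ 2 := Finset.sum_comm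
  have hswapAB : ∑ i, ∑ j, A j j * B i i = ∑ i, ∑ j, A i i * B j j := Finset.sum_comm
  simp only [Finset.sum_add_distrib, Finset.sum_sub_distrib, hswapK, hswapAB,
    ← Finset.mul_sum _ _ (2 : ℝ)]
  simp only [Matrix.trace, Matrix.diag, Matrix.mul_apply, hK', hB', sq, Finset.sum_mul_sum]
  ring

lemma trace_sub_mul_sub_nonneg (K K' : Matrix n n ℝ) (hK : K'ᵀ = K) :
    0 ≤ ((K - K') * (K' - K)).trace := by
  have h : (K - K')ᴴ = K' - K := by
    rw [Matrix.conjTranspose_eq_transpose_of_trivial, Matrix.transpose_sub, hK,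
      ← hK, Matrix.transpose_transpose]
  simpa only [h] using (Matrix.posSemidef_self_mul_conjTranspose (K - K')).trace_nonneg

end Matrix

section Covariance

variable {d : ℕ} {Ω : Type*} [MeasurableSpace Ω] {μ : Measure Ω}

lemma covMatrix_transpose (X Y : Ω → EuclideanSpace ℝ (Fin d)) :
    (covMatrix μ X Y)ᵀ = covMatrix μ Y X := by
  ext i j
  simp only [covMatrix, Matrix.transpose_apply, Matrix.of_apply, mul_comm]

variable {U V U' V' : Ω → EuclideanSpace ℝ (Fin d)}

theorem integral_parallelogram_area_sq_eq [IsProbabilityMeasure μ]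
    (hindep : IndepFun (fun ω => (U ω, V ω)) (fun ω => (U' ω, V' ω)) μ)
    (hident : IdentDistrib (fun ω => (U ω, V ω)) (fun ω => (U' ω, V' ω)) μ μ)
    (hU : ∀ i, MemLp (fun ω => U ω i) 4 μ) (hV : ∀ i, MemLp (fun ω => V ω i) 4 μ)
    (hU0 : ∀ i, ∫ ω, U ω i ∂μ = 0) (hV0 : ∀ i, ∫ ω, V ω i ∂μ = 0) :
    ∫ ω, (‖U ω - U' ω‖ ^ 2 * ‖V ω - V' ω‖ ^ 2 - ⟪U ω - U' ω, V ω - V' ω⟫ ^ 2) ∂μ =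
      2 * (∫ ω, (‖U ω‖ ^ 2 * ‖V ω‖ ^ 2 - ⟪U ω, V ω⟫ ^ 2) ∂μ)
      + ((covMatrix μ U V - covMatrix μ V U) * (covMatrix μ V U - covMatrix μ U V)).trace
      + 2 * ((covMatrix μ U U).trace * (covMatrix μ V V).trace
          - (covMatrix μ U V).trace ^ 2
          - (covMatrix μ U U * covMatrix μ V V).trace
          + (covMatrix μ U V * covMatrix μ V U).trace) := by
  have hfst (i : Fin d) :
      Measurable fun p : EuclideanSpace ℝ (Fin d) × EuclideanSpace ℝ (Fin d) => p.1 i := by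
    fun_prop
  have hsnd (i : Fin d) :
      Measurable fun p : EuclideanSpace ℝ (Fin d) × EuclideanSpace ℝ (Fin d) => p.2 i := by
    fun_prop
  have hU' (i : Fin d) : MemLp (fun ω => U' ω i) 4 μ :=
    (hident.comp (hfst i)).memLp_iff.mp (hU i)
  have hV' (i : Fin d) : MemLp (fun ω => V' ω i) 4 μ :=
    (hident.comp (hsnd i)).memLp_iff.mp (hV i)
  have hsquares (i j : Fin d) :
      ∫ ω, (U ω - U' ω) i * (U ω - U' ω) i * (V ω - V' ω) j * (V ω - V' ω) j ∂μ
        = 2 * ∫ ω, U ω i * U ω i * V ω j * V ω j ∂μ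
          + 2 * (covMatrix μ U U i i * covMatrix μ V V j j
            + covMatrix μ U V i j * covMatrix μ U V i j
            + covMatrix μ U V i j * covMatrix μ U V i j) :=
    integral_mul_four_sub_comp_of_indep_copy hindep hident (hfst i) (hfst i) (hsnd j) (hsnd j)
      (hU i) (hU i) (hV j) (hV j) (hU0 i) (hU0 i) (hV0 j) (hV0 j)
  have hmixed (i j : Fin d) :
      ∫ ω, (U ω - U' ω) i * (V ω - V' ω) i * (U ω - U' ω) j * (V ω - V' ω) j ∂μ
        = 2 * ∫ ω, U ω i * V ω i * U ω j * V ω j ∂μ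
          + 2 * (covMatrix μ U V i i * covMatrix μ U V j j
            + covMatrix μ U U i j * covMatrix μ V V i j
            + covMatrix μ U V i j * covMatrix μ V U i j) :=
    integral_mul_four_sub_comp_of_indep_copy hindep hident (hfst i) (hsnd i) (hfst j) (hsnd j)
      (hU i) (hV i) (hU j) (hV j) (hU0 i) (hV0 i) (hU0 j) (hV0 j)
  rw [integral_norm_sq_mul_norm_sq_sub_inner_sq (fun i => (hU i).sub (hU' i))
      (fun i => (hV i).sub (hV' i)), integral_norm_sq_mul_norm_sq_sub_inner_sq hU hV,
    add_assoc, ← sum_sum_cov_products_eq _ _ _ _ (covMatrix_transpose V V)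
      (covMatrix_transpose V U)]
  simp only [hsquares, hmixed, Finset.mul_sum, ← Finset.sum_add_distrib]
  exact Finset.sum_congr rfl fun i _ => Finset.sum_congr rfl fun j _ => by ring

lemma covMatrix_wedge_nonneg
    (hindep : IndepFun (fun ω => (U ω, V ω)) (fun ω => (U' ω, V' ω)) μ)
    (hident : IdentDistrib (fun ω => (U ω, V ω)) (fun ω => (U' ω, V' ω)) μ μ)
    (hU : ∀ i, MemLp (fun ω => U ω i) 2 μ) (hV : ∀ i, MemLp (fun ω => V ω i) 2 μ)
    (i j : Fin d) :
    0 ≤ covMatrix μ U U i i * covMatrix μ V V j j + covMatrix μ U U j j * covMatrix μ V V i i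
      - 2 * (covMatrix μ U U i j * covMatrix μ V V i j) + covMatrix μ U V i j ^ 2
      + covMatrix μ U V j i ^ 2 - 2 * (covMatrix μ U V i i * covMatrix μ U V j j) := by
  -- `∑ₖ φₖ(U, V) ψₖ(U', V') = U_i V'_j - U_j V'_i + V_j U'_i - V_i U'_j`
  have h := sum_sum_integral_mul_mul_integral_nonneg hindep hident univ
    (φ := ![fun p => p.1 i, fun p => -p.1 j, fun p => p.2 j, fun p => -p.2 i])
    (ψ := ![fun p => p.2 j, fun p => p.2 i, fun p => p.1 i, fun p => p.1 j])
    (fun k => by fin_cases k <;> simp <;> fun_prop)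
    (fun k => by fin_cases k <;> simp <;> fun_prop)
    (fun k => by fin_cases k <;> [exact hU i; exact (hU j).neg; exact hV j; exact (hV i).neg])
    (fun k => by fin_cases k <;> [exact hV j; exact hV i; exact hU i; exact hU j])
  simp only [Nat.succ_eq_add_one, Nat.reduceAdd, Matrix.cons_val', Matrix.cons_val_fin_one,
    Fin.sum_univ_four, Fin.isValue, Matrix.cons_val_zero, Matrix.cons_val_one, mul_neg,
    integral_neg, neg_mul, Matrix.cons_val, neg_neg] at h
  have hcomm (X Y : Ω → EuclideanSpace ℝ (Fin d)) (a b : Fin d) :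
      ∫ ω, X ω a * Y ω b ∂μ = ∫ ω, Y ω b * X ω a ∂μ := by
    simp_rw [mul_comm]
  rw [hcomm V U j i, hcomm V U j j, hcomm V U i i, hcomm V U i j, hcomm U U j i,
    hcomm V V j i] at h
  simp only [covMatrix, Matrix.of_apply]
  linarith

lemma covMatrix_trace_combination_nonneg
    (hindep : IndepFun (fun ω => (U ω, V ω)) (fun ω => (U' ω, V' ω)) μ)
    (hident : IdentDistrib (fun ω => (U ω, V ω)) (fun ω => (U' ω, V' ω)) μ μ)
    (hU : ∀ i, MemLp (fun ω => U ω i) 2 μ) (hV : ∀ i, MemLp (fun ω => V ω i) 2 μ) :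
    0 ≤ (covMatrix μ U U).trace * (covMatrix μ V V).trace - (covMatrix μ U V).trace ^ 2
      - (covMatrix μ U U * covMatrix μ V V).trace
      + (covMatrix μ U V * covMatrix μ V U).trace := by
  have h := Finset.sum_nonneg fun i (_ : i ∈ univ) => Finset.sum_nonneg fun j (_ : j ∈ univ) =>
    covMatrix_wedge_nonneg hindep hident hU hV i j
  rw [sum_sum_wedge_eq _ _ _ _ (covMatrix_transpose V V) (covMatrix_transpose V U)] at h
  linarith

end Covariance

/-- Exact decomposition of the average square parallelogram area:
for centered random vectors `U, V` in `ℝ^d` with finite fourth moments and `(U_*,V_*)`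
an independent copy of `(U,V)`:
`𝔼(|U−U_*|²|V−V_*|² − ((U−U_*)·(V−V_*))²)
  = 2𝔼(|U|²|V|² − (U·V)²) + Tr((C_{U,V}−C_{V,U})(C_{V,U}−C_{U,V}))
    + 2(Tr C_{U,U} · Tr C_{V,V} − (Tr C_{U,V})² − Tr(C_{U,U}C_{V,V}) + Tr(C_{U,V}C_{V,U}))`,
and each of the three summands is nonnegative. -/
theorem stmt4 {d : ℕ} {Ω : Type*} [MeasurableSpace Ω] (μ : Measure Ω)
    [IsProbabilityMeasure μ]
    (U V Us Vs : Ω → EuclideanSpace ℝ (Fin d))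
    (hUm : Measurable U) (hVm : Measurable V) (hUsm : Measurable Us) (hVsm : Measurable Vs)
    (hUcen : ∫ ω, U ω ∂μ = 0) (hVcen : ∫ ω, V ω ∂μ = 0)
    (hU4 : Integrable (fun ω => ‖U ω‖ ^ 4) μ) (hV4 : Integrable (fun ω => ‖V ω‖ ^ 4) μ)
    (hindep : IndepFun (fun ω => (U ω, V ω)) (fun ω => (Us ω, Vs ω)) μ)
    (hcopy : Measure.map (fun ω => (U ω, V ω)) μ = Measure.map (fun ω => (Us ω, Vs ω)) μ) :
    (∫ ω, (‖U ω - Us ω‖ ^ 2 * ‖V ω - Vs ω‖ ^ 2 - ⟪U ω - Us ω, V ω - Vs ω⟫ ^ 2) ∂μ =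
        2 * (∫ ω, (‖U ω‖ ^ 2 * ‖V ω‖ ^ 2 - ⟪U ω, V ω⟫ ^ 2) ∂μ)
        + ((covMatrix μ U V - covMatrix μ V U) * (covMatrix μ V U - covMatrix μ U V)).trace
        + 2 * ((covMatrix μ U U).trace * (covMatrix μ V V).trace
            - (covMatrix μ U V).trace ^ 2
            - (covMatrix μ U U * covMatrix μ V V).trace
            + (covMatrix μ U V * covMatrix μ V U).trace))
    ∧ 0 ≤ ∫ ω, (‖U ω‖ ^ 2 * ‖V ω‖ ^ 2 - ⟪U ω, V ω⟫ ^ 2) ∂μ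
    ∧ 0 ≤ ((covMatrix μ U V - covMatrix μ V U) * (covMatrix μ V U - covMatrix μ U V)).trace
    ∧ 0 ≤ (covMatrix μ U U).trace * (covMatrix μ V V).trace
            - (covMatrix μ U V).trace ^ 2
            - (covMatrix μ U U * covMatrix μ V V).trace
            + (covMatrix μ U V * covMatrix μ V U).trace := by
  have hident : IdentDistrib (fun ω => (U ω, V ω)) (fun ω => (Us ω, Vs ω)) μ μ :=
    ⟨(hUm.prodMk hVm).aemeasurable, (hUsm.prodMk hVsm).aemeasurable, hcopy⟩
  have hU := memLp_four_of_integrable_norm_pow_four hUm.aestronglyMeasurable hU4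
  have hV := memLp_four_of_integrable_norm_pow_four hVm.aestronglyMeasurable hV4
  have hU0 := integral_apply_eq_zero (hU.integrable (by norm_num)) hUcen
  have hV0 := integral_apply_eq_zero (hV.integrable (by norm_num)) hVcen
  have hU2 := (hU.mono_exponent (p := 2) (by norm_num)).euclidean_apply
  have hV2 := (hV.mono_exponent (p := 2) (by norm_num)).euclidean_apply
  refine ⟨integral_parallelogram_area_sq_eq hindep hident hU.euclidean_apply hV.euclidean_apply
      hU0 hV0, integral_nonneg fun ω => ?_, trace_sub_mul_sub_nonneg _ _ (covMatrix_transpose V U),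
    covMatrix_trace_combination_nonneg hindep hident hU2 hV2⟩
  simpa only [Pi.zero_apply, sub_nonneg, sq_abs, mul_pow] using
    pow_le_pow_left₀ (abs_nonneg _) (abs_real_inner_le_norm (U ω) (V ω)) 2
end

section
/- Let d ≥ 3, let u, u_*, v, v_* ∈ ℝ^d with u ≠ u_* and v ≠ v_*, set n_u := (u−u_*)/|u−u_*|, n_v := (v−v_*)/|v−v_*|, and let m_u, m_v, l be unit vectors such that (n_u, m_u, n_v, m_v, l) satisfies the frame hypothesis (n_u ⟂ m_u, n_v ⟂ m_v, l orthogonal to all four, n_u·n_v = m_u·m_v, n_u·m_v = −m_u·n_v). For (θ,φ) ∈ [0,π]×[0,π] define n'_u(θ,φ) := cosθ n_u + sinθ cosφ m_u + sinθ sinφ l, n'_v(θ,φ) analogously with (n_v,m_v,l), and the coupled post-collisional velocities u'(θ,φ) := (u+u_*)/2 + (|u−u_*|/2)n'_u(θ,φ), u'_*(θ,φ) := (u+u_*)/2 − (|u−u_*|/2)n'_u(θ,φ), and v'(θ,φ), v'_*(θ,φ) analogously. Let b be a (nonnegative) measure on [0,π] with λ := ∫_{[0,π]} sin²θ b(dθ)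 < ∞. Then the total expected coupling decrease equals the coupling creation functional: ∫_{[0,π]} ∫₀^π ( |u−v|² + |u_*−v_*|² − |u'(θ,φ)−v'(θ,φ)|² − |u'_*(θ,φ)−v'_*(θ,φ)|² ) · ( sin^{d−3}φ / ∫₀^π sin^{d−3}ψ dψ ) dφ b(dθ) = λ · (c_{d−1}/c_{d−3}) · ( |u−u_*||v−v_*| − (u−u_*)·(v−v_*) ). -/
/-!
The collision mapping conserves momentum, so by the parallelogram law the coupling decrease
`|u−v|² + |u_*−v_*|² − |u'−v'|² − |u'_*−v'_*|²` equals `|u−u_*||v−v_*| n'_u·n'_v − (u−u_*)·(v−v_*)`.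
The frame hypothesis makes `n'_u·n'_v = n_u·n_v + sin²θ sin²φ (1 − n_u·n_v)`, so the decrease is
`sin²θ sin²φ (|u−u_*||v−v_*| − (u−u_*)·(v−v_*))`. The `θ`-factor integrates to `λ`, and against the
normalized density `sin^{d−3}φ` the `φ`-factor integrates to `c_{d−1}/c_{d−3}`.
-/

open Real MeasureTheory
open scoped RealInnerProductSpace

/-- The `k`-th Wallis integral `c_k = ∫₀^{π/2} sin^k φ dφ`. -/
noncomputable def wallis (k : ℕ) : ℝ := ∫ φ in (0 : ℝ)..(π / 2), sin φ ^ k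

/-- Post-collisional direction of the spherical coupling, in the frame `(n, m, l)`,
with scattering angle `θ` and azimuthal angle `φ`. -/
noncomputable def postDir {d : ℕ} (n m l : EuclideanSpace ℝ (Fin d)) (θ φ : ℝ) :
    EuclideanSpace ℝ (Fin d) :=
  cos θ • n + (sin θ * cos φ) • m + (sin θ * sin φ) • l

/-- First post-collisional velocity of the two-body collision mapping. -/
noncomputable def postVel₁ {d : ℕ} (x xs dir : EuclideanSpace ℝ (Fin d)) :
    EuclideanSpace ℝ (Fin d) :=
  (2 : ℝ)⁻¹ • (x + xs) + (‖x - xs‖ / 2) • dir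

/-- Second post-collisional velocity of the two-body collision mapping. -/
noncomputable def postVel₂ {d : ℕ} (x xs dir : EuclideanSpace ℝ (Fin d)) :
    EuclideanSpace ℝ (Fin d) :=
  (2 : ℝ)⁻¹ • (x + xs) - (‖x - xs‖ / 2) • dir

lemma integral_sin_pow_zero_pi (k : ℕ) : ∫ x in (0 : ℝ)..π, sin x ^ k = 2 * wallis k := by
  have hint : ∀ a b : ℝ, IntervalIntegrable (fun x => sin x ^ k) volume a b :=
    fun a b => (continuous_sin.pow k).intervalIntegrable a b
  have hsymm : ∫ x in (π / 2 : ℝ)..π, sin x ^ k = wallis k := by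
    have h := intervalIntegral.integral_comp_sub_left (fun x => sin x ^ k) π (a := π / 2) (b := π)
    simp only [sin_pi_sub, sub_self, sub_half] at h
    exact h
  rw [← intervalIntegral.integral_add_adjacent_intervals (hint 0 (π / 2)) (hint (π / 2) π), hsymm,
    wallis]
  ring

lemma integral_sin_sq_mul_sin_pow_div (k : ℕ) :
    ∫ φ in (0 : ℝ)..π, sin φ ^ 2 * (sin φ ^ k / ∫ ψ in (0 : ℝ)..π, sin ψ ^ k) =
      wallis (k + 2) / wallis k := by
  simp_rw [mul_div_assoc', ← pow_add, add_comm 2 k]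
  rw [intervalIntegral.integral_div, integral_sin_pow_zero_pi, integral_sin_pow_zero_pi,
    mul_div_mul_left _ _ two_ne_zero]

lemma norm_add_sq_add_norm_sub_sq_sub {E : Type*} [NormedAddCommGroup E] [InnerProductSpace ℝ E]
    (x w y : E) :
    ‖x + w‖ ^ 2 + ‖x - w‖ ^ 2 - ‖x + y‖ ^ 2 - ‖x - y‖ ^ 2 = 2 * (‖w‖ ^ 2 - ‖y‖ ^ 2) := by
  rw [norm_add_sq_real, norm_sub_sq_real, norm_add_sq_real, norm_sub_sq_real]
  ring

lemma norm_mul_norm_mul_inner_normalize {E : Type*} [NormedAddCommGroup E]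
    [InnerProductSpace ℝ E] {x y : E} (hx : x ≠ 0) (hy : y ≠ 0) :
    ‖x‖ * ‖y‖ * ⟪‖x‖⁻¹ • x, ‖y‖⁻¹ • y⟫ = ⟪x, y⟫ := by
  have hx' : ‖x‖ ≠ 0 := norm_ne_zero_iff.mpr hx
  have hy' : ‖y‖ ≠ 0 := norm_ne_zero_iff.mpr hy
  rw [real_inner_smul_left, real_inner_smul_right]
  field_simp

section Collision

variable {d : ℕ}

lemma coupling_decrease_eq {u us v vs D E : EuclideanSpace ℝ (Fin d)} (hD : ‖D‖ = 1)
    (hE : ‖E‖ = 1) :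
    ‖u - v‖ ^ 2 + ‖us - vs‖ ^ 2 - ‖postVel₁ u us D - postVel₁ v vs E‖ ^ 2
        - ‖postVel₂ u us D - postVel₂ v vs E‖ ^ 2 =
      ‖u - us‖ * ‖v - vs‖ * ⟪D, E⟫ - ⟪u - us, v - vs⟫ := by
  set x := (2 : ℝ)⁻¹ • (u + us) - (2 : ℝ)⁻¹ • (v + vs)
  set w := (2 : ℝ)⁻¹ • ((u - us) - (v - vs))
  set y := (2 : ℝ)⁻¹ • (‖u - us‖ • D - ‖v - vs‖ • E)
  have h₁ : u - v = x + w := by module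
  have h₂ : us - vs = x - w := by module
  have h₃ : postVel₁ u us D - postVel₁ v vs E = x + y := by simp only [postVel₁]; module
  have h₄ : postVel₂ u us D - postVel₂ v vs E = x - y := by simp only [postVel₂]; module
  rw [h₁, h₂, h₃, h₄, norm_add_sq_add_norm_sub_sq_sub, norm_smul, norm_smul, mul_pow, mul_pow,
    norm_sub_sq_real (u - us), norm_sub_sq_real (‖u - us‖ • D)]
  simp only [norm_smul, norm_norm, norm_inv, Real.norm_ofNat, real_inner_smul_left,
    real_inner_smul_right, hD, hE]
  ring

variable {n m n' m' l : EuclideanSpace ℝ (Fin d)}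

lemma inner_postDir_postDir (hl : ‖l‖ = 1) (hnm' : ⟪n, m'⟫ = -⟪m, n'⟫) (hmm' : ⟪m, m'⟫ = ⟪n, n'⟫)
    (hnl : ⟪n, l⟫ = 0) (hml : ⟪m, l⟫ = 0) (hln' : ⟪l, n'⟫ = 0) (hlm' : ⟪l, m'⟫ = 0)
    (θ φ : ℝ) :
    ⟪postDir n m l θ φ, postDir n' m' l θ φ⟫ = ⟪n, n'⟫ + sin θ ^ 2 * sin φ ^ 2 * (1 - ⟪n, n'⟫) := by
  have hll : ⟪l, l⟫ = 1 := by rw [real_inner_self_eq_norm_sq, hl, one_pow]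
  simp only [postDir, inner_add_left, inner_add_right, real_inner_smul_left,
    real_inner_smul_right, hll, hnm', hmm', hnl, hml, hln', hlm']
  linear_combination ⟪n, n'⟫ * sin θ ^ 2 * sin_sq_add_cos_sq φ + ⟪n, n'⟫ * sin_sq_add_cos_sq θ

lemma norm_postDir (hn : ‖n‖ = 1) (hm : ‖m‖ = 1) (hl : ‖l‖ = 1) (hnm : ⟪n, m⟫ = 0)
    (hnl : ⟪n, l⟫ = 0) (hml : ⟪m, l⟫ = 0) (θ φ : ℝ) : ‖postDir n m l θ φ‖ = 1 := by
  have hmn : ⟪m, n⟫ = 0 := by rw [real_inner_comm, hnm]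
  have hself : ⟪postDir n m l θ φ, postDir n m l θ φ⟫ = 1 := by
    rw [inner_postDir_postDir hl (by rw [hnm, hmn, neg_zero])
      (by rw [real_inner_self_eq_norm_sq, real_inner_self_eq_norm_sq, hn, hm]) hnl hml
      (by rw [real_inner_comm, hnl]) (by rw [real_inner_comm, hml]),
      real_inner_self_eq_norm_sq, hn]
    ring
  rwa [real_inner_self_eq_norm_sq, pow_eq_one_iff_of_nonneg (norm_nonneg _) two_ne_zero] at hself

end Collision

theorem stmt13_general {d : ℕ} (hd : 3 ≤ d)
    (u us v vs : EuclideanSpace ℝ (Fin d)) (hu : u ≠ us) (hv : v ≠ vs)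
    (mu mv l : EuclideanSpace ℝ (Fin d))
    (hmu : ‖mu‖ = 1) (hmv : ‖mv‖ = 1) (hl : ‖l‖ = 1)
    (hnumu : ⟪‖u - us‖⁻¹ • (u - us), mu⟫ = 0) (hnvmv : ⟪‖v - vs‖⁻¹ • (v - vs), mv⟫ = 0)
    (hlnu : ⟪l, ‖u - us‖⁻¹ • (u - us)⟫ = 0) (hlmu : ⟪l, mu⟫ = 0)
    (hlnv : ⟪l, ‖v - vs‖⁻¹ • (v - vs)⟫ = 0) (hlmv : ⟪l, mv⟫ = 0)
    (hframe1 : ⟪‖u - us‖⁻¹ • (u - us), ‖v - vs‖⁻¹ • (v - vs)⟫ = ⟪mu, mv⟫)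
    (hframe2 : ⟪‖u - us‖⁻¹ • (u - us), mv⟫ = -⟪mu, ‖v - vs‖⁻¹ • (v - vs)⟫)
    (b : Measure ℝ) :
    ∫ θ, (∫ φ in (0 : ℝ)..π,
        (‖u - v‖ ^ 2 + ‖us - vs‖ ^ 2
          - ‖postVel₁ u us (postDir (‖u - us‖⁻¹ • (u - us)) mu l θ φ) -
              postVel₁ v vs (postDir (‖v - vs‖⁻¹ • (v - vs)) mv l θ φ)‖ ^ 2
          - ‖postVel₂ u us (postDir (‖u - us‖⁻¹ • (u - us)) mu l θ φ) -
              postVel₂ v vs (postDir (‖v - vs‖⁻¹ • (v - vs)) mv l θ φ)‖ ^ 2) *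
          (sin φ ^ (d - 3) / ∫ ψ in (0 : ℝ)..π, sin ψ ^ (d - 3))) ∂b =
      (∫ θ, sin θ ^ 2 ∂b) * (wallis (d - 1) / wallis (d - 3)) *
        (‖u - us‖ * ‖v - vs‖ - ⟪u - us, v - vs⟫) := by
  have hus : u - us ≠ 0 := sub_ne_zero.mpr hu
  have hvs : v - vs ≠ 0 := sub_ne_zero.mpr hv
  have hnu : ‖‖u - us‖⁻¹ • (u - us)‖ = 1 := by simpa using norm_smul_inv_norm (𝕜 := ℝ) hus
  have hnv : ‖‖v - vs‖⁻¹ • (v - vs)‖ = 1 := by simpa using norm_smul_inv_norm (𝕜 := ℝ) hvs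
  have hdecrease : ∀ θ φ : ℝ, ‖u - v‖ ^ 2 + ‖us - vs‖ ^ 2
      - ‖postVel₁ u us (postDir (‖u - us‖⁻¹ • (u - us)) mu l θ φ) -
          postVel₁ v vs (postDir (‖v - vs‖⁻¹ • (v - vs)) mv l θ φ)‖ ^ 2
      - ‖postVel₂ u us (postDir (‖u - us‖⁻¹ • (u - us)) mu l θ φ) -
          postVel₂ v vs (postDir (‖v - vs‖⁻¹ • (v - vs)) mv l θ φ)‖ ^ 2 =
        sin θ ^ 2 * sin φ ^ 2 * (‖u - us‖ * ‖v - vs‖ - ⟪u - us, v - vs⟫) := by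
    intro θ φ
    rw [coupling_decrease_eq
      (norm_postDir hnu hmu hl hnumu (by rwa [real_inner_comm]) (by rwa [real_inner_comm]) θ φ)
      (norm_postDir hnv hmv hl hnvmv (by rwa [real_inner_comm]) (by rwa [real_inner_comm]) θ φ),
      inner_postDir_postDir hl hframe2 hframe1.symm (by rwa [real_inner_comm])
        (by rwa [real_inner_comm]) hlnv hlmv,
      ← norm_mul_norm_mul_inner_normalize hus hvs]
    ring
  have hazimuthal : ∀ θ, ∫ φ in (0 : ℝ)..π,
      sin θ ^ 2 * sin φ ^ 2 * (‖u - us‖ * ‖v - vs‖ - ⟪u - us, v - vs⟫) *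
        (sin φ ^ (d - 3) / ∫ ψ in (0 : ℝ)..π, sin ψ ^ (d - 3)) =
      sin θ ^ 2 * (wallis (d - 1) / wallis (d - 3) * (‖u - us‖ * ‖v - vs‖ - ⟪u - us, v - vs⟫)) := by
    intro θ
    rw [show d - 1 = d - 3 + 2 by omega, ← integral_sin_sq_mul_sin_pow_div,
      ← intervalIntegral.integral_mul_const, ← intervalIntegral.integral_const_mul]
    congr 1 with φ
    ring
  simp_rw [hdecrease, hazimuthal, integral_mul_const]
  ring

/-- The total expected coupling decrease of a spherically coupled
Maxwell collision, integrated over the azimuthal density `sin^{d−3}φ` on `[0,π]` and over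
the angular collision kernel `b`, equals the coupling creation functional
`λ (c_{d−1}/c_{d−3}) (|u−u_*||v−v_*| − (u−u_*)·(v−v_*))` with `λ = ∫ sin²θ b(dθ)`. -/
theorem stmt13 {d : ℕ} (hd : 3 ≤ d)
    (u us v vs : EuclideanSpace ℝ (Fin d)) (hu : u ≠ us) (hv : v ≠ vs)
    (mu mv l : EuclideanSpace ℝ (Fin d))
    (hmu : ‖mu‖ = 1) (hmv : ‖mv‖ = 1) (hl : ‖l‖ = 1)
    (hnumu : ⟪‖u - us‖⁻¹ • (u - us), mu⟫ = 0) (hnvmv : ⟪‖v - vs‖⁻¹ • (v - vs), mv⟫ = 0)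
    (hlnu : ⟪l, ‖u - us‖⁻¹ • (u - us)⟫ = 0) (hlmu : ⟪l, mu⟫ = 0)
    (hlnv : ⟪l, ‖v - vs‖⁻¹ • (v - vs)⟫ = 0) (hlmv : ⟪l, mv⟫ = 0)
    (hframe1 : ⟪‖u - us‖⁻¹ • (u - us), ‖v - vs‖⁻¹ • (v - vs)⟫ = ⟪mu, mv⟫)
    (hframe2 : ⟪‖u - us‖⁻¹ • (u - us), mv⟫ = -⟪mu, ‖v - vs‖⁻¹ • (v - vs)⟫)
    (b : Measure ℝ) (hbsupp : b (Set.Icc (0 : ℝ) π)ᶜ = 0)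
    (hlam : Integrable (fun θ => sin θ ^ 2) b) :
    ∫ θ, (∫ φ in (0 : ℝ)..π,
        (‖u - v‖ ^ 2 + ‖us - vs‖ ^ 2
          - ‖postVel₁ u us (postDir (‖u - us‖⁻¹ • (u - us)) mu l θ φ) -
              postVel₁ v vs (postDir (‖v - vs‖⁻¹ • (v - vs)) mv l θ φ)‖ ^ 2
          - ‖postVel₂ u us (postDir (‖u - us‖⁻¹ • (u - us)) mu l θ φ) -
              postVel₂ v vs (postDir (‖v - vs‖⁻¹ • (v - vs)) mv l θ φ)‖ ^ 2) *
          (sin φ ^ (d - 3) / ∫ ψ in (0 : ℝ)..π, sin ψ ^ (d - 3))) ∂b =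
      (∫ θ, sin θ ^ 2 ∂b) * (wallis (d - 1) / wallis (d - 3)) *
        (‖u - us‖ * ‖v - vs‖ - ⟪u - us, v - vs⟫) :=
  stmt13_general hd u us v vs hu hv mu mv l hmu hmv hl hnumu hnvmv hlnu hlmu hlnv hlmv hframe1
    hframe2 b
end
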